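/- arXiv:1708.01244 — 6 statements merged into one kernel-verified Lean document; each statement's English description precedes it below -/
import Mathlib

section
/- Let $A^l, A^u \in \mathbb{R}^{m\times n}$ with $A^l \le A^u$ entrywise, and $f^l \le f^u$ in $\mathbb{R}^m$. If $u \ge 0$, $A^l u \le f^u$, and $A^u u \ge f^l$, then there exist a matrix $A$ with $A^l \le A \le A^u$ and a vector $f$ with $f^l \le f \le f^u$ such that $Au = f$. -/
theorem stmt_2 (m n : ℕ) (Al Au : Matrix (Fin m) (Fin n) ℝ)
    (hA : ∀ i j, Al i j ≤ Au i j) (fl fu : Fin m → ℝ) (hf : fl ≤ fu)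
    (u : Fin n → ℝ) (hu : 0 ≤ u)
    (h1 : Al.mulVec u ≤ fu) (h2 : fl ≤ Au.mulVec u) :
    ∃ A : Matrix (Fin m) (Fin n) ℝ, (∀ i j, Al i j ≤ A i j) ∧ (∀ i j, A i j ≤ Au i j) ∧
      ∃ f : Fin m → ℝ, fl ≤ f ∧ f ≤ fu ∧ A.mulVec u = f := by
  set a : Fin m → ℝ := Al.mulVec u with ha
  set b : Fin m → ℝ := Au.mulVec u with hb
  have hab : ∀ i, a i ≤ b i := by
    intro i
    simp only [ha, hb]
    simp only [Matrix.mulVec, dotProduct]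
    exact Finset.sum_le_sum fun j _ => mul_le_mul_of_nonneg_right (hA i j) (hu j)
  set t : Fin m → ℝ := fun i => max (fl i) (a i) with ht
  set α : Fin m → ℝ := fun i => if b i = a i then 0 else (t i - a i) / (b i - a i) with hα
  have hα0 : ∀ i, 0 ≤ α i := by
    intro i
    simp only [hα]
    split
    · exact le_refl 0
    · exact div_nonneg (by simp [ht]) (by linarith [lt_of_le_of_ne (hab i) (Ne.symm ‹_›)])
  have htb : ∀ i, t i ≤ b i := fun i => max_le (h2 i) (hab i)
  have hα1 : ∀ i, α i ≤ 1 := by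
    intro i
    simp only [hα]
    split
    · norm_num
    · have hba : a i < b i := lt_of_le_of_ne (hab i) (Ne.symm ‹_›)
      rw [div_le_one (by linarith)]
      linarith [htb i]
  refine ⟨fun i j => Al i j + α i * (Au i j - Al i j), ?_, ?_, t, ?_, ?_, ?_⟩
  · intro i j
    dsimp only
    nlinarith [hα0 i, hA i j]
  · intro i j
    dsimp only
    nlinarith [hα1 i, hα0 i, hA i j]
  · intro i; exact le_max_left _ _
  · intro i; exact max_le (hf i) (h1 i)
  · funext i
    have : (Matrix.mulVec (fun i j => Al i j + α i * (Au i j - Al i j)) u) i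
        = a i + α i * (b i - a i) := by
      simp only [Matrix.mulVec, dotProduct, ha, hb, add_mul, sub_mul, mul_assoc,
        Finset.sum_add_distrib, ← Finset.mul_sum, Finset.sum_sub_distrib]
    rw [this]
    simp only [hα]
    split
    · have h' : t i = a i := le_antisymm ((htb i).trans_eq ‹b i = a i›) (le_max_right _ _)
      rw [h']; ring
    · have hba : a i < b i := lt_of_le_of_ne (hab i) (Ne.symm ‹_›)
      rw [div_mul_cancel₀ (t i - a i) (sub_ne_zero.mpr ‹¬b i = a i›)]
      ring
end

section
/- Let $A^l, A^u \in \mathbb{R}^{m\times n}$ with $A^l \le A^u$, $f^l \le f^u$ in $\mathbb{R}^m$, and $u \ge 0$. Then the following are equivalent: (i) $A^l u \le f^u$ and $A^u u \ge f^l$; (ii) there exist $A$ with $A^l \le A \le A^u$ and $f$ with $f^l \le f \le f^u$ such that $Au = f$. -/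
theorem stmt_3 (m n : ℕ) (Al Au : Matrix (Fin m) (Fin n) ℝ)
    (hA : ∀ i j, Al i j ≤ Au i j) (fl fu : Fin m → ℝ) (hf : fl ≤ fu)
    (u : Fin n → ℝ) (hu : 0 ≤ u) :
    (Al.mulVec u ≤ fu ∧ fl ≤ Au.mulVec u) ↔
      (∃ A : Matrix (Fin m) (Fin n) ℝ, (∀ i j, Al i j ≤ A i j) ∧ (∀ i j, A i j ≤ Au i j) ∧
        ∃ f : Fin m → ℝ, fl ≤ f ∧ f ≤ fu ∧ A.mulVec u = f) := by
  have hab : ∀ i, Al.mulVec u i ≤ Au.mulVec u i := by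
    intro i
    simp only [Matrix.mulVec, dotProduct]
    apply Finset.sum_le_sum
    intro j _
    exact mul_le_mul_of_nonneg_right (hA i j) (hu j)
  constructor
  · rintro ⟨h1, h2⟩
    set a : Fin m → ℝ := Al.mulVec u with ha
    set b : Fin m → ℝ := Au.mulVec u with hb
    set f : Fin m → ℝ := fun i => max (fl i) (a i) with hfdef
    have hflf : fl ≤ f := fun i => le_max_left _ _
    have haf : ∀ i, a i ≤ f i := fun i => le_max_right _ _
    have hffu : f ≤ fu := fun i => max_le (hf i) (h1 i)
    have hfb : ∀ i, f i ≤ b i := fun i => max_le (h2 i) (hab i)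
    set t : Fin m → ℝ := fun i => if b i = a i then 0 else (f i - a i) / (b i - a i) with ht
    have ht0 : ∀ i, 0 ≤ t i := by
      intro i
      by_cases h : b i = a i
      · simp [ht, h]
      · simp only [ht, h, if_false]
        apply div_nonneg (by linarith [haf i])
        have := hab i
        have : a i < b i := lt_of_le_of_ne this (Ne.symm h)
        linarith
    have ht1 : ∀ i, t i ≤ 1 := by
      intro i
      by_cases h : b i = a i
      · simp [ht, h]
      · simp only [ht, h, if_false]
        have hlt : a i < b i := lt_of_le_of_ne (hab i) (Ne.symm h)
        rw [div_le_one (by linarith)]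
        linarith [hfb i]
    have hteq : ∀ i, a i + t i * (b i - a i) = f i := by
      intro i
      by_cases h : b i = a i
      · have h1 : a i ≤ f i := haf i
        have h2 : f i ≤ b i := hfb i
        simp [ht, h]
        linarith
      · have hlt : a i < b i := lt_of_le_of_ne (hab i) (Ne.symm h)
        have hne : b i - a i ≠ 0 := by intro hc; apply h; linarith
        simp only [ht, h, if_false]
        rw [div_mul_cancel₀ _ hne]
        ring
    refine ⟨Matrix.of fun i j => Al i j + t i * (Au i j - Al i j), ?_, ?_, f, hflf, hffu, ?_⟩
    · intro i j
      show Al i j ≤ Al i j + t i * (Au i j - Al i j)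
      nlinarith [ht0 i, hA i j]
    · intro i j
      show Al i j + t i * (Au i j - Al i j) ≤ Au i j
      nlinarith [ht1 i, ht0 i, hA i j]
    · funext i
      have key : (Matrix.of fun i j => Al i j + t i * (Au i j - Al i j)).mulVec u i
          = a i + t i * (b i - a i) := by
        simp only [Matrix.mulVec, dotProduct, Matrix.of_apply, ha, hb]
        rw [mul_sub, Finset.mul_sum, Finset.mul_sum, ← Finset.sum_sub_distrib, ← Finset.sum_add_distrib]
        congr 1
        funext j
        ring
      rw [key, hteq i]
  · rintro ⟨A, hAl, hAu, f, hfl, hfu, hAf⟩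
    have h1 : ∀ i, Al.mulVec u i ≤ A.mulVec u i := by
      intro i
      simp only [Matrix.mulVec, dotProduct]
      apply Finset.sum_le_sum
      intro j _
      exact mul_le_mul_of_nonneg_right (hAl i j) (hu j)
    have h2 : ∀ i, A.mulVec u i ≤ Au.mulVec u i := by
      intro i
      simp only [Matrix.mulVec, dotProduct]
      apply Finset.sum_le_sum
      intro j _
      exact mul_le_mul_of_nonneg_right (hAu i j) (hu j)
    constructor
    · intro i
      calc Al.mulVec u i ≤ A.mulVec u i := h1 i
        _ = f i := by rw [hAf]
        _ ≤ fu i := hfu i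
    · intro i
      calc fl i ≤ f i := hfl i
        _ = A.mulVec u i := by rw [hAf]
        _ ≤ Au.mulVec u i := h2 i
end

section
/- Let $a^l, a^u \in \mathbb{R}^n$ with $0 \le a^l \le a^u$, let $u, v \in \mathbb{R}^n$ with $u, v \ge 0$, and let $f, g \in \mathbb{R}$ with $\langle a^l, u\rangle \le f \le \langle a^u, u\rangle$ and $\langle a^l, v\rangle \le g \le \langle a^u, v\rangle$. Suppose $y \in \mathbb{R}^{n+4}$ satisfies: for all $j$, $(a^u_j - a^l_j)(u_j y_1 + v_j y_3) + y_{j+4} \ge 0$ and $(a^u_j - a^l_j)(u_j y_2 + v_j y_4) + y_{j+4} \ge 0$, and $(f - \langle a^l,u\rangle)y_1 + (\langle a^u,u\rangle - f)y_2 + (g - \langle a^l,v\rangle)y_3 + (\langle a^u,v\rangle - g)y_4 + \sum_{j=1}^n y_{j+4} < 0$. Then $(y_1 - y_2)(y_3 - y_4) < 0$. -/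
theorem stmt_8 (n : ℕ) (al au u v : Fin n → ℝ)
    (hal : 0 ≤ al) (hA : al ≤ au) (hu : 0 ≤ u) (hv : 0 ≤ v) (f g : ℝ)
    (hf1 : ∑ j, al j * u j ≤ f) (hf2 : f ≤ ∑ j, au j * u j)
    (hg1 : ∑ j, al j * v j ≤ g) (hg2 : g ≤ ∑ j, au j * v j)
    (y1 y2 y3 y4 : ℝ) (y : Fin n → ℝ)
    (h1 : ∀ j, (au j - al j) * (u j * y1 + v j * y3) + y j ≥ 0)
    (h2 : ∀ j, (au j - al j) * (u j * y2 + v j * y4) + y j ≥ 0)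
    (h3 : (f - ∑ j, al j * u j) * y1 + ((∑ j, au j * u j) - f) * y2 +
      (g - ∑ j, al j * v j) * y3 + ((∑ j, au j * v j) - g) * y4 + ∑ j, y j < 0) :
    (y1 - y2) * (y3 - y4) < 0 := by
  by_contra hc
  push_neg at hc
  have key1 : (0:ℝ) ≤ ∑ j, ((au j - al j) * (u j * y1 + v j * y3) + y j) :=
    Finset.sum_nonneg fun j _ => h1 j
  have key2 : (0:ℝ) ≤ ∑ j, ((au j - al j) * (u j * y2 + v j * y4) + y j) :=
    Finset.sum_nonneg fun j _ => h2 j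
  have expand : ∀ a b : ℝ, (∑ j, ((au j - al j) * (u j * a + v j * b) + y j)) =
      ((∑ j, au j * u j) - ∑ j, al j * u j) * a +
      (((∑ j, au j * v j) - ∑ j, al j * v j) * b + ∑ j, y j) := by
    intro a b
    rw [sub_mul, sub_mul, Finset.sum_mul, Finset.sum_mul, Finset.sum_mul, Finset.sum_mul,
      ← Finset.sum_sub_distrib, ← Finset.sum_sub_distrib, ← Finset.sum_add_distrib,
      ← Finset.sum_add_distrib]
    exact Finset.sum_congr rfl fun j _ => by ring
  rw [expand] at key1 key2
  rcases mul_nonneg_iff.mp hc with ⟨ha, hb⟩ | ⟨ha, hb⟩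
  · -- y1 ≥ y2, y3 ≥ y4 : use key2
    have hF : (0:ℝ) ≤ f - ∑ j, al j * u j := by linarith
    have hG : (0:ℝ) ≤ g - ∑ j, al j * v j := by linarith
    nlinarith [mul_nonneg hF ha, mul_nonneg hG hb]
  · -- y1 ≤ y2, y3 ≤ y4 : use key1
    rw [sub_nonpos] at ha hb
    have hF : (0:ℝ) ≤ (∑ j, au j * u j) - f := by linarith
    have hG : (0:ℝ) ≤ (∑ j, au j * v j) - g := by linarith
    nlinarith [mul_nonneg hF (sub_nonneg.mpr ha), mul_nonneg hG (sub_nonneg.mpr hb)]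
end

section
/- Let $a^l, a^u, u, v \in \mathbb{R}^n$ with $a^l \le a^u$, $v > 0$ (all components strictly positive), $u \ge 0$, and let $f, g \in \mathbb{R}$. Define $\varphi : \mathbb{R} \to \mathbb{R}$ by $\varphi(z) = \sum_{j=1}^n (z - u_j/v_j)\, v_j\, c_j(z) + f - gz$, where $c_j(z) = a^u_j$ if $u_j/v_j \le z$ and $c_j(z) = a^l_j$ if $u_j/v_j > z$. Then $\varphi$ is continuous on $\mathbb{R}$. -/
theorem stmt_9 (n : ℕ) (al au u v : Fin n → ℝ)
    (hA : al ≤ au) (hv : ∀ j, 0 < v j) (hu : 0 ≤ u) (f g : ℝ) :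
    Continuous (fun z : ℝ =>
      (∑ j, (z - u j / v j) * v j * (if u j / v j ≤ z then au j else al j)) + f - g * z) := by
  apply Continuous.sub _ (continuous_const.mul continuous_id)
  apply Continuous.add _ continuous_const
  apply continuous_finset_sum
  intro j _
  have : (fun z : ℝ => (z - u j / v j) * v j * (if u j / v j ≤ z then au j else al j))
      = fun z : ℝ => if u j / v j ≤ z then (z - u j / v j) * v j * au j
        else (z - u j / v j) * v j * al j := by
    funext z; split <;> rfl
  rw [this]
  apply Continuous.if_le
  · exact ((continuous_id.sub continuous_const).mul continuous_const).mul continuous_const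
  · exact ((continuous_id.sub continuous_const).mul continuous_const).mul continuous_const
  · exact continuous_const
  · exact continuous_id
  · intro x hx; rw [← hx]; ring
end

section
/- Let $a^l, a^u, u, v \in \mathbb{R}^n$ with $a^l \le a^u$, $v > 0$, $u \ge 0$, and $f, g \in \mathbb{R}$. Define $\varphi(z) = \sum_{j=1}^n (z - u_j/v_j)\, v_j\, c_j(z) + f - gz$ with $c_j(z) = a^u_j$ if $u_j/v_j \le z$ and $c_j(z) = a^l_j$ otherwise. Then $\varphi$ is convex on $\mathbb{R}$. -/
/-!
With `t = u j / v j`, the `j`-th summand is `v j` times `(z - t) * (if t ≤ z then A else a)`, and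
for `a ≤ A` the latter is the maximum of the two lines `(z - t) * a` and `(z - t) * A`. So `φ` is a
nonnegative combination of maxima of affine functions, plus an affine function.
-/

open Set

theorem ConvexOn.sum {𝕜 E β ι : Type*} [Semiring 𝕜] [PartialOrder 𝕜]
    [AddCommMonoid E] [AddCommMonoid β] [PartialOrder β] [IsOrderedAddMonoid β]
    [SMul 𝕜 E] [Module 𝕜 β] [PosSMulMono 𝕜 β] {s : Set E} (hs : Convex 𝕜 s)
    {t : Finset ι} {f : ι → E → β} (hf : ∀ i ∈ t, ConvexOn 𝕜 s (f i)) :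
    ConvexOn 𝕜 s fun x => ∑ i ∈ t, f i x := by
  classical
  induction t using Finset.induction_on with
  | empty => simpa using convexOn_const (0 : β) hs
  | insert i t hi ih =>
    simp only [Finset.sum_insert hi]
    exact (hf i (Finset.mem_insert_self i t)).add
      (ih fun j hj => hf j (Finset.mem_insert_of_mem hj))

theorem convexOn_sub_mul_const (t c : ℝ) : ConvexOn ℝ univ fun z : ℝ => (z - t) * c := by
  refine (((LinearMap.mul ℝ ℝ c).convexOn convex_univ).add_const (-(t * c))).congr fun z _ => ?_
  show c * z + -(t * c) = (z - t) * c
  ring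

theorem sub_mul_ite_eq_max {t a A : ℝ} (h : a ≤ A) (z : ℝ) :
    (z - t) * (if t ≤ z then A else a) = max ((z - t) * a) ((z - t) * A) := by
  split_ifs with hz
  · exact (max_eq_right (mul_le_mul_of_nonneg_left h (sub_nonneg.2 hz))).symm
  · exact (max_eq_left (mul_le_mul_of_nonpos_left h (sub_nonpos.2 (not_le.1 hz).le))).symm

theorem convexOn_sub_mul_ite {t a A : ℝ} (h : a ≤ A) :
    ConvexOn ℝ univ fun z : ℝ => (z - t) * (if t ≤ z then A else a) := by
  simp_rw [sub_mul_ite_eq_max h]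
  exact (convexOn_sub_mul_const t a).sup (convexOn_sub_mul_const t A)

theorem convexOn_sub_mul_mul_ite {t w a A : ℝ} (hw : 0 ≤ w) (h : a ≤ A) :
    ConvexOn ℝ univ fun z : ℝ => (z - t) * w * (if t ≤ z then A else a) := by
  refine ((convexOn_sub_mul_ite (t := t) h).smul hw).congr fun z _ => ?_
  simp only [smul_eq_mul]
  ring

theorem stmt_10_general (n : ℕ) (al au u v : Fin n → ℝ)
    (hA : al ≤ au) (hv : ∀ j, 0 < v j) (f g : ℝ) :
    ConvexOn ℝ Set.univ (fun z : ℝ =>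
      (∑ j, (z - u j / v j) * v j * (if u j / v j ≤ z then au j else al j)) + f - g * z) :=
  ((ConvexOn.sum convex_univ fun j _ =>
      convexOn_sub_mul_mul_ite (hv j).le (hA j)).add_const f).sub
    ((LinearMap.mul ℝ ℝ g).concaveOn convex_univ)

theorem stmt_10 (n : ℕ) (al au u v : Fin n → ℝ)
    (hA : al ≤ au) (hv : ∀ j, 0 < v j) (hu : 0 ≤ u) (f g : ℝ) :
    ConvexOn ℝ Set.univ (fun z : ℝ =>
      (∑ j, (z - u j / v j) * v j * (if u j / v j ≤ z then au j else al j)) + f - g * z) :=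
  stmt_10_general n al au u v hA hv f g
end

section
/- Let $a^l, a^u, u, v \in \mathbb{R}^n$ with $a^l \le a^u$, $v > 0$, $u \ge 0$, $g \in \mathbb{R}$ with $\langle a^l, v\rangle \le g \le \langle a^u, v\rangle$, and define $\varphi$ as the piecewise linear function $\varphi(z) = \sum_{j=1}^n (z - u_j/v_j) v_j c_j(z) + f - gz$ with $c_j(z) = a^u_j$ if $u_j/v_j \le z$, else $a^l_j$. Then for $z \le \min_j u_j/v_j$ the slope of $\varphi$ equals $\langle a^l, v\rangle - g \le 0$, and for $z > \max_j u_j/v_j$ the slope equals $\langle a^u, v\rangle - g \ge 0$; in particular $\varphi$ attains its minimum on $\mathbb{R}$. -/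
theorem stmt_11 (n : ℕ) (al au u v : Fin n → ℝ)
    (hA : al ≤ au) (hv : ∀ j, 0 < v j) (hu : 0 ≤ u) (f g : ℝ)
    (hg1 : ∑ j, al j * v j ≤ g) (hg2 : g ≤ ∑ j, au j * v j)
    (φ : ℝ → ℝ)
    (hφ : φ = fun z : ℝ =>
      (∑ j, (z - u j / v j) * v j * (if u j / v j ≤ z then au j else al j)) + f - g * z) :
    (∀ z₁ z₂ : ℝ, z₁ < z₂ → (∀ j, z₂ ≤ u j / v j) →
      φ z₂ - φ z₁ = ((∑ j, al j * v j) - g) * (z₂ - z₁)) ∧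
    ((∑ j, al j * v j) - g ≤ 0) ∧
    (∀ z₁ z₂ : ℝ, z₁ < z₂ → (∀ j, u j / v j < z₁) →
      φ z₂ - φ z₁ = ((∑ j, au j * v j) - g) * (z₂ - z₁)) ∧
    (0 ≤ (∑ j, au j * v j) - g) ∧
    (∃ z₀ : ℝ, ∀ z : ℝ, φ z₀ ≤ φ z) := by
  have key1 : ∀ z : ℝ, (∀ j, z ≤ u j / v j) →
      (∑ j, (z - u j / v j) * v j * (if u j / v j ≤ z then au j else al j))
      = ∑ j, (z - u j / v j) * v j * al j := by
    intro z hz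
    refine Finset.sum_congr rfl fun j _ => ?_
    by_cases h : u j / v j ≤ z
    · have hzz : u j / v j = z := le_antisymm h (hz j)
      simp [hzz]
    · simp [h]
  have key2 : ∀ z : ℝ, (∀ j, u j / v j ≤ z) →
      (∑ j, (z - u j / v j) * v j * (if u j / v j ≤ z then au j else al j))
      = ∑ j, (z - u j / v j) * v j * au j := by
    intro z hz
    exact Finset.sum_congr rfl fun j _ => by simp [hz j]
  have diffL : ∀ z₁ z₂ : ℝ, (∀ j, z₁ ≤ u j / v j) → (∀ j, z₂ ≤ u j / v j) →
      φ z₂ - φ z₁ = ((∑ j, al j * v j) - g) * (z₂ - z₁) := by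
    intro z₁ z₂ h1 h2
    have hs : (∑ j, (z₂ - u j / v j) * v j * al j) - (∑ j, (z₁ - u j / v j) * v j * al j)
        = (∑ j, al j * v j) * (z₂ - z₁) := by
      rw [← Finset.sum_sub_distrib, Finset.sum_mul]
      exact Finset.sum_congr rfl fun j _ => by ring
    rw [hφ]; simp only
    rw [key1 z₁ h1, key1 z₂ h2]
    linear_combination hs
  have diffR : ∀ z₁ z₂ : ℝ, (∀ j, u j / v j ≤ z₁) → (∀ j, u j / v j ≤ z₂) →
      φ z₂ - φ z₁ = ((∑ j, au j * v j) - g) * (z₂ - z₁) := by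
    intro z₁ z₂ h1 h2
    have hs : (∑ j, (z₂ - u j / v j) * v j * au j) - (∑ j, (z₁ - u j / v j) * v j * au j)
        = (∑ j, au j * v j) * (z₂ - z₁) := by
      rw [← Finset.sum_sub_distrib, Finset.sum_mul]
      exact Finset.sum_congr rfl fun j _ => by ring
    rw [hφ]; simp only
    rw [key2 z₁ h1, key2 z₂ h2]
    linear_combination hs
  refine ⟨fun z₁ z₂ h12 h2 => diffL z₁ z₂ (fun j => le_trans h12.le (h2 j)) h2,
    by linarith, fun z₁ z₂ h12 h1 => diffR z₁ z₂ (fun j => (h1 j).le)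
      (fun j => le_trans (h1 j).le h12.le), by linarith, ?_⟩
  -- existence of a global minimum
  have hcont : Continuous φ := by
    rw [hφ]
    refine Continuous.sub (Continuous.add ?_ continuous_const)
      (continuous_const.mul continuous_id)
    refine continuous_finset_sum _ fun j _ => ?_
    have hrw : (fun z : ℝ => (z - u j / v j) * v j * (if u j / v j ≤ z then au j else al j))
        = fun z : ℝ => if u j / v j ≤ z then (z - u j / v j) * v j * au j
            else (z - u j / v j) * v j * al j := by
      funext z; split <;> rfl
    rw [hrw]
    refine Continuous.if_le ?_ ?_ continuous_const continuous_id ?_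
    · fun_prop
    · fun_prop
    · intro x hx; rw [← hx]; ring
  set B : ℝ := ∑ j, |u j / v j| with hB
  have hBnn : 0 ≤ B := Finset.sum_nonneg fun j _ => abs_nonneg _
  have hBub : ∀ j, u j / v j ≤ B := fun j =>
    le_trans (le_abs_self _)
      (Finset.single_le_sum (fun i _ => abs_nonneg (u i / v i)) (Finset.mem_univ j))
  have hBlb : ∀ j, -B ≤ u j / v j := fun j =>
    le_trans (neg_le_neg (Finset.single_le_sum (fun i _ => abs_nonneg (u i / v i))
      (Finset.mem_univ j))) (neg_abs_le _)
  obtain ⟨z₀, hz₀mem, hz₀min⟩ := isCompact_Icc.exists_isMinOn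
    (Set.nonempty_Icc.mpr (by linarith : -B - 1 ≤ B + 1)) hcont.continuousOn
  refine ⟨z₀, fun z => ?_⟩
  by_cases hz : z ∈ Set.Icc (-B - 1) (B + 1)
  · exact hz₀min hz
  · rcases not_and_or.mp hz with h | h
    · push_neg at h
      have hle : φ (-B - 1) ≤ φ z := by
        have hd := diffL z (-B - 1) (fun j => by linarith [hBlb j]) (fun j => by linarith [hBlb j])
        nlinarith [mul_nonpos_of_nonpos_of_nonneg (by linarith : (∑ j, al j * v j) - g ≤ 0)
          (by linarith : (0:ℝ) ≤ (-B - 1) - z)]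
      exact le_trans (hz₀min (Set.mem_Icc.mpr ⟨le_refl _, by linarith⟩)) hle
    · push_neg at h
      have hle : φ (B + 1) ≤ φ z := by
        have hd := diffR (B + 1) z (fun j => by linarith [hBub j]) (fun j => by linarith [hBub j])
        nlinarith [mul_nonneg (by linarith : (0:ℝ) ≤ (∑ j, au j * v j) - g)
          (by linarith : (0:ℝ) ≤ z - (B + 1))]
      exact le_trans (hz₀min (Set.mem_Icc.mpr ⟨by linarith, le_refl _⟩)) hle
end
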